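/- Let G = (V,E) be a finite simple graph and let p ∈ [0,1]^V lie in the interior Shearer set of G, i.e. Ξ_{G[W]}(p) > 0 for every W ⊆ V. Set c := 1 − (1 − Ξ_G(p))^{1/|V|}. Then c > 0 and every BRF Y in the weak dependency class C_w^G(p) stochastically dominates the homogeneous Bernoulli product field π_{c·1}, i.e. Y ⪰ π_{c·1}. -/

import Mathlib

open MeasureTheory Finset
open scoped Classical

/-- The critical function Ξ_{G[W]}(p). -/
noncomputable def Xi {V : Type*} (G : SimpleGraph V) (W : Finset V) (p : V → ℝ) : ℝ :=
  ∑ T ∈ W.powerset,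
    if ∀ u ∈ T, ∀ w ∈ T, ¬ G.Adj u w then ∏ v ∈ T, -(1 - p v) else 0

/-- Cylinder event. -/
def cylEvt {V : Type*} (S : Finset V) (s : V → Bool) : Set (V → Bool) :=
  {ω | ∀ v ∈ S, ω v = s v}

def WeakDep {V : Type*} (G : SimpleGraph V) (p : V → ℝ)
    (μ : Measure (V → Bool)) : Prop :=
  IsProbabilityMeasure μ ∧
  ∀ (v : V) (S : Finset V), (∀ w ∈ S, w ≠ v ∧ ¬ G.Adj v w) →
    ∀ s : V → Bool, 0 < (μ (cylEvt S s)).toReal →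
      p v ≤ (μ ({ω | ω v = true} ∩ cylEvt S s)).toReal / (μ (cylEvt S s)).toReal

def StrongDep {V : Type*} (G : SimpleGraph V) (p : V → ℝ)
    (μ : Measure (V → Bool)) : Prop :=
  IsProbabilityMeasure μ ∧
  (∀ v : V, (μ {ω | ω v = true}).toReal = p v) ∧
  ∀ (S₁ S₂ : Finset V), (∀ u ∈ S₁, ∀ w ∈ S₂, u ≠ w ∧ ¬ G.Adj u w) →
    ∀ s₁ s₂ : V → Bool,
      μ (cylEvt S₁ s₁ ∩ cylEvt S₂ s₂) = μ (cylEvt S₁ s₁) * μ (cylEvt S₂ s₂)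

/-- Expectation of f under product field π_c restricted to W. -/
noncomputable def prodExp {V : Type*} (c : V → ℝ) (W : Finset V)
    (f : (W → Bool) → ℝ) : ℝ :=
  ∑ s : W → Bool, (∏ v : W, if s v then c v.1 else 1 - c v.1) * f s

/-- μ stochastically dominates the Bernoulli product field π_c. -/
def DomProd {V : Type*} (μ : Measure (V → Bool)) (c : V → ℝ) : Prop :=
  ∀ (W : Finset V) (f : (W → Bool) → ℝ), Monotone f →
    prodExp c W f ≤ ∫ ω, f (fun v => ω v.1) ∂μ

/-- ν is the Bernoulli product field π_c. -/
def IsProduct {V : Type*} (c : V → ℝ) (μ : Measure (V → Bool)) : Prop :=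
  IsProbabilityMeasure μ ∧
  ∀ (S : Finset V) (s : V → Bool),
    μ (cylEvt S s) = ∏ v ∈ S, ENNReal.ofReal (if s v then c v else 1 - c v)

/-- μ is Shearer's measure μ_{G,p}. -/
def IsShearer {V : Type*} [Fintype V] (G : SimpleGraph V) (p : V → ℝ)
    (μ : Measure (V → Bool)) : Prop :=
  IsProbabilityMeasure μ ∧
  ∀ W : Finset V,
    (μ {ω | ∀ v, (ω v = false ↔ v ∈ W)}).toReal =
      ∑ T ∈ (Finset.univ : Finset V).powerset,
        if W ⊆ T ∧ ∀ u ∈ T, ∀ w ∈ T, ¬ G.Adj u w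
        then (-1 : ℝ) ^ (T.card - W.card) * ∏ v ∈ T, (1 - p v) else 0

/-!
Write `m A := P(Y_a = 1 for all a ∈ A)`. Removing a vertex `v` from `A` satisfies the exact
recursion `Ξ_A = Ξ_{A∖v} − q_v Ξ_{(A∖v)∖N(v)}`, and weak dependency at `v` gives the same
recursion for `m` as an inequality, `m (A∖v) − m A ≤ q_v m ((A∖v)∖N(v))`. By strong induction
on `A` the ratio `m A / Ξ_A` is then monotone along inclusion, so
`m W ≥ Ξ_W ≥ Ξ_V = 1 − (1 − c)^{|V|} ≥ 1 − (1 − c)^{|W|}`.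

A monotone `f` on `{0,1}^W` is at most `f 1` except at the all-zero configuration, and at
least `f 0` except at the all-one configuration; hence
`E_{π_c} f ≤ f 0 + (1 − (1 − c)^{|W|}) (f 1 − f 0) ≤ f 0 + m W (f 1 − f 0) ≤ E f(Y_W)`.
-/

section Xi

variable {V : Type*} (G : SimpleGraph V) (p : V → ℝ)

theorem Xi_empty : Xi G ∅ p = 1 := by
  simp [Xi]

theorem forall_insert_not_adj_iff {v : V} {T : Finset V} :
    (∀ u ∈ insert v T, ∀ w ∈ insert v T, ¬ G.Adj u w) ↔
      (∀ u ∈ T, ∀ w ∈ T, ¬ G.Adj u w) ∧ ∀ w ∈ T, ¬ G.Adj v w := by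
  simp only [mem_insert, forall_eq_or_imp, G.irrefl, not_false_eq_true, true_and]
  constructor
  · rintro ⟨hv, hT⟩
    exact ⟨fun u hu => (hT u hu).2, hv⟩
  · rintro ⟨hT, hv⟩
    exact ⟨hv, fun u hu => ⟨fun h => hv u hu h.symm, hT u hu⟩⟩

theorem powerset_filter_subset_eq {A B : Finset V} (h : B ⊆ A) :
    A.powerset.filter (· ⊆ B) = B.powerset := by
  ext T
  simpa using fun hTB => hTB.trans h

theorem Xi_insert {v : V} {A : Finset V} (hv : v ∉ A) :
    Xi G (insert v A) p = Xi G A p - (1 - p v) * Xi G (A.filter (¬ G.Adj v ·)) p := by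
  set A₁ := A.filter (¬ G.Adj v ·)
  have hterm : ∀ T ∈ A.powerset,
      (if ∀ u ∈ insert v T, ∀ w ∈ insert v T, ¬ G.Adj u w
        then ∏ u ∈ insert v T, -(1 - p u) else 0) =
      -(1 - p v) * if T ⊆ A₁ then
        (if ∀ u ∈ T, ∀ w ∈ T, ¬ G.Adj u w then ∏ u ∈ T, -(1 - p u) else 0) else 0 := by
    intro T hT
    have hTA : T ⊆ A := mem_powerset.1 hT
    have hsub : T ⊆ A₁ ↔ ∀ w ∈ T, ¬ G.Adj v w := by
      simp only [A₁, subset_iff, mem_filter]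
      exact forall₂_congr fun w hw => and_iff_right (hTA hw)
    simp only [forall_insert_not_adj_iff, hsub, prod_insert fun h => hv (hTA h)]
    split_ifs <;> simp_all
  have hA₁ : ∑ T ∈ A.powerset, (if T ⊆ A₁ then
      (if ∀ u ∈ T, ∀ w ∈ T, ¬ G.Adj u w then ∏ u ∈ T, -(1 - p u) else 0) else 0) =
      Xi G A₁ p := by
    rw [← sum_filter, powerset_filter_subset_eq (filter_subset _ _), Xi]
  rw [Xi, sum_powerset_insert hv, sum_congr rfl hterm, ← mul_sum, hA₁, ← Xi]
  ring

theorem Xi_mul_le_mul_Xi (hp : ∀ v, p v ≤ 1) (hint : ∀ W, 0 < Xi G W p) {m : Finset V → ℝ}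
    (hm : ∀ v A, v ∉ A → m A - m (insert v A) ≤ (1 - p v) * m (A.filter (¬ G.Adj v ·)))
    {A B : Finset V} (hBA : B ⊆ A) : Xi G A p * m B ≤ m A * Xi G B p := by
  induction A using Finset.strongInduction generalizing B with
  | H A ih =>
  rcases hBA.eq_or_ssubset with rfl | hBA
  · rw [mul_comm]
  obtain ⟨v, hvA, hvB⟩ := exists_of_ssubset hBA
  set A' := A.erase v
  have hA' : A' ⊂ A := erase_ssubset hvA
  have hstep : Xi G A p * m A' ≤ m A * Xi G A' p := by
    have hXi := Xi_insert G p (notMem_erase v A)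
    have hm' := hm v A' (notMem_erase v A)
    rw [insert_erase hvA] at hXi hm'
    have hratio := ih A' hA' (filter_subset (¬ G.Adj v ·) A')
    have hq : 0 ≤ 1 - p v := sub_nonneg.2 (hp v)
    rw [hXi]
    nlinarith [mul_le_mul_of_nonneg_left hratio hq, mul_le_mul_of_nonneg_left hm' (hint A').le]
  have hB := ih A' hA' (subset_erase.2 ⟨hBA.subset, hvB⟩)
  refine le_of_mul_le_mul_right ?_ (hint A')
  nlinarith [mul_le_mul_of_nonneg_left hB (hint A).le,
    mul_le_mul_of_nonneg_right hstep (hint B).le]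

-- The constant `m = 1` satisfies the recursion: it is `m` for the field that is identically `1`.
theorem Xi_antitone (hp : ∀ v, p v ≤ 1) (hint : ∀ W, 0 < Xi G W p) {A B : Finset V}
    (hBA : B ⊆ A) : Xi G A p ≤ Xi G B p := by
  simpa using Xi_mul_le_mul_Xi G p hp hint (m := fun _ => 1)
    (fun v _ _ => by simpa using sub_nonneg.2 (hp v)) hBA

theorem Xi_le_of_sub_le (hp : ∀ v, p v ≤ 1) (hint : ∀ W, 0 < Xi G W p) {m : Finset V → ℝ}
    (hm₀ : m ∅ = 1)
    (hm : ∀ v A, v ∉ A → m A - m (insert v A) ≤ (1 - p v) * m (A.filter (¬ G.Adj v ·)))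
    (A : Finset V) : Xi G A p ≤ m A := by
  simpa [hm₀, Xi_empty] using Xi_mul_le_mul_Xi G p hp hint hm (empty_subset A)

end Xi

section WeakDep

variable {V : Type*} {G : SimpleGraph V} {p : V → ℝ} {μ : Measure (V → Bool)}

theorem measurableSet_cylEvt (S : Finset V) (s : V → Bool) : MeasurableSet (cylEvt S s) := by
  have h : cylEvt S s = ⋂ v ∈ (S : Set V), (fun ω : V → Bool => ω v) ⁻¹' {s v} := by
    ext ω; simp [cylEvt]
  rw [h]
  exact .biInter S.countable_toSet fun v _ => measurable_pi_apply v (measurableSet_singleton _)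

theorem cylEvt_empty (s : V → Bool) : cylEvt ∅ s = Set.univ := by
  ext ω; simp [cylEvt]

theorem cylEvt_insert (v : V) (A : Finset V) (s : V → Bool) :
    cylEvt (insert v A) s = cylEvt A s ∩ {ω | ω v = s v} := by
  ext ω; simp [cylEvt, and_comm]

theorem cylEvt_anti {A B : Finset V} (h : A ⊆ B) (s : V → Bool) : cylEvt B s ⊆ cylEvt A s :=
  fun _ hω v hv => hω v (h hv)

theorem WeakDep.measureReal_cylEvt_sub_le (hμ : WeakDep G p μ) {v : V} {A : Finset V}
    (hv : v ∉ A) :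
    μ.real (cylEvt A fun _ => true) - μ.real (cylEvt (insert v A) fun _ => true) ≤
      (1 - p v) * μ.real (cylEvt (A.filter (¬ G.Adj v ·)) fun _ => true) := by
  have := hμ.1
  set A₁ := A.filter (¬ G.Adj v ·)
  set T : Set (V → Bool) := {ω | ω v = true}
  have hT : MeasurableSet T := measurableSet_eq_fun (measurable_pi_apply v) measurable_const
  have hA := measureReal_inter_add_sdiff (μ := μ) (s := cylEvt A fun _ => true) hT
  have hA₁ := measureReal_inter_add_sdiff (μ := μ) (s := cylEvt A₁ fun _ => true) hT
  have hmono :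
      μ.real ((cylEvt A fun _ => true) \ T) ≤ μ.real ((cylEvt A₁ fun _ => true) \ T) :=
    measureReal_mono (Set.sdiff_subset_sdiff_left (cylEvt_anti (filter_subset _ A) _))
  have hcond :
      p v * μ.real (cylEvt A₁ fun _ => true) ≤ μ.real ((cylEvt A₁ fun _ => true) ∩ T) := by
    rcases (measureReal_nonneg (s := cylEvt A₁ fun _ => true)).eq_or_lt with h0 | hpos
    · rw [← h0, mul_zero]
      exact measureReal_nonneg
    · have hA₁v : ∀ w ∈ A₁, w ≠ v ∧ ¬ G.Adj v w := fun w hw =>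
        ⟨fun h => hv (h ▸ (mem_filter.1 hw).1), (mem_filter.1 hw).2⟩
      have := hμ.2 v A₁ hA₁v (fun _ => true) hpos
      rw [Set.inter_comm, ← le_div_iff₀ hpos]
      exact this
  rw [cylEvt_insert]
  linarith

theorem WeakDep.Xi_le_measureReal_cylEvt (hp : ∀ v, p v ≤ 1) (hint : ∀ W, 0 < Xi G W p)
    (hμ : WeakDep G p μ) (A : Finset V) : Xi G A p ≤ μ.real (cylEvt A fun _ => true) := by
  have := hμ.1
  refine Xi_le_of_sub_le G p hp hint (m := fun A => μ.real (cylEvt A fun _ => true)) ?_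
    (fun _ _ hv => hμ.measureReal_cylEvt_sub_le hv) A
  rw [cylEvt_empty, probReal_univ]

end WeakDep

section Domination

variable {V : Type*}

theorem prodExp_const_le {c : ℝ} (hc₀ : 0 ≤ c) (hc₁ : c ≤ 1) (W : Finset V)
    {f : (W → Bool) → ℝ} (hf : Monotone f) :
    prodExp (fun _ => c) W f ≤ f ⊥ + (1 - (1 - c) ^ #W) * (f ⊤ - f ⊥) := by
  set w : (W → Bool) → ℝ := fun s => ∏ v : W, if s v then c else 1 - c
  have hw₁ : ∑ s, w s = 1 :=
    calc ∑ s, w s = ∏ _v : W, ∑ b : Bool, (if b then c else 1 - c) := by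
          rw [prod_univ_sum, Fintype.piFinset_univ]
      _ = 1 := by simp
  have hw_bot : w ⊥ = (1 - c) ^ #W := by simp [w]
  calc prodExp (fun _ => c) W f = ∑ s, w s * f s := rfl
    _ ≤ ∑ s, w s * (f ⊤ - if s = ⊥ then f ⊤ - f ⊥ else 0) := by
      gcongr with s _
      split_ifs with h
      · simp [h]
      · simpa using hf le_top
    _ = f ⊥ + (1 - (1 - c) ^ #W) * (f ⊤ - f ⊥) := by
      simp only [mul_sub, sum_sub_distrib, ← sum_mul, hw₁, mul_ite, mul_zero, sum_ite_eq',
        mem_univ, if_true, hw_bot]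
      ring

theorem le_integral_of_monotone (μ : Measure (V → Bool)) [IsProbabilityMeasure μ]
    (W : Finset V) {f : (W → Bool) → ℝ} (hf : Monotone f) :
    f ⊥ + μ.real (cylEvt W fun _ => true) * (f ⊤ - f ⊥) ≤ ∫ ω, f (fun v => ω v.1) ∂μ := by
  set E := cylEvt W fun _ => true
  have hE := measurableSet_cylEvt W fun _ => true
  have hproj : Measurable fun (ω : V → Bool) (v : W) => ω v.1 :=
    measurable_pi_lambda _ fun v => measurable_pi_apply v.1
  have hlower :
      (fun ω => f ⊥ + E.indicator (fun _ => f ⊤ - f ⊥) ω) ≤ fun ω => f fun v => ω v.1 := by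
    intro ω
    by_cases hω : ω ∈ E
    · have htop : (fun v : W => ω v.1) = ⊤ := funext fun v => hω v.1 v.2
      simp [Set.indicator_of_mem hω, htop]
    · simpa [Set.indicator_of_notMem hω] using hf bot_le
  calc f ⊥ + μ.real E * (f ⊤ - f ⊥)
      = ∫ ω, f ⊥ + E.indicator (fun _ => f ⊤ - f ⊥) ω ∂μ := by
        rw [integral_add (integrable_const _) ((integrable_const _).indicator hE),
          integral_const, integral_indicator_const _ hE]
        simp [E]
    _ ≤ ∫ ω, f (fun v => ω v.1) ∂μ :=
      integral_mono (.add (integrable_const _) ((integrable_const _).indicator hE))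
        (Integrable.of_finite.comp_measurable hproj) hlower

theorem domProd_const_of_le_measureReal_cylEvt {c : ℝ} (hc₀ : 0 ≤ c) (hc₁ : c ≤ 1)
    (μ : Measure (V → Bool)) [IsProbabilityMeasure μ]
    (h : ∀ W : Finset V, 1 - (1 - c) ^ #W ≤ μ.real (cylEvt W fun _ => true)) :
    DomProd μ fun _ => c := by
  intro W f hf
  have hf_nonneg : 0 ≤ f ⊤ - f ⊥ := sub_nonneg.2 (hf bot_le)
  calc prodExp (fun _ => c) W f ≤ f ⊥ + (1 - (1 - c) ^ #W) * (f ⊤ - f ⊥) :=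
        prodExp_const_le hc₀ hc₁ W hf
    _ ≤ f ⊥ + μ.real (cylEvt W fun _ => true) * (f ⊤ - f ⊥) := by
      gcongr
      exact h W
    _ ≤ ∫ ω, f (fun v => ω v.1) ∂μ := le_integral_of_monotone μ W hf

end Domination

/-- on a finite graph, inside the interior Shearer set every BRF
in the weak dependency class dominates the homogeneous product field with
parameter c = 1 - (1 - Ξ_G(p))^(1/|V|) > 0. -/
theorem stmt14 {V : Type*} [Fintype V] [Nonempty V] (G : SimpleGraph V)
    (p : V → ℝ) (hp : ∀ v, p v ∈ Set.Icc (0:ℝ) 1)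
    (hint : ∀ W : Finset V, 0 < Xi G W p) :
    0 < 1 - (1 - Xi G Finset.univ p) ^ ((Fintype.card V : ℝ)⁻¹) ∧
    ∀ μ : Measure (V → Bool), WeakDep G p μ →
      DomProd μ (fun _ => 1 - (1 - Xi G Finset.univ p) ^ ((Fintype.card V : ℝ)⁻¹)) := by
  have hp₁ : ∀ v, p v ≤ 1 := fun v => (hp v).2
  set Ξ := Xi G univ p
  have hΞ₀ : 0 < Ξ := hint univ
  have hΞ₁ : Ξ ≤ 1 := by simpa [Xi_empty] using Xi_antitone G p hp₁ hint (empty_subset univ)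
  set d := (1 - Ξ) ^ ((Fintype.card V : ℝ)⁻¹)
  have hd₀ : 0 ≤ d := by positivity
  have hd₁ : d < 1 := Real.rpow_lt_one (by linarith) (by linarith) (by positivity)
  have hd_pow : d ^ Fintype.card V = 1 - Ξ :=
    Real.rpow_inv_natCast_pow (by linarith) Fintype.card_ne_zero
  refine ⟨sub_pos.2 hd₁, fun μ hμ => ?_⟩
  have := hμ.1
  refine domProd_const_of_le_measureReal_cylEvt (by linarith) (by linarith) μ fun W => ?_
  calc 1 - (1 - (1 - d)) ^ #W ≤ 1 - d ^ Fintype.card V := by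
        rw [sub_sub_cancel]
        exact sub_le_sub_left (pow_le_pow_of_le_one hd₀ hd₁.le (card_le_univ W)) 1
    _ = Ξ := by rw [hd_pow, sub_sub_cancel]
    _ ≤ Xi G W p := Xi_antitone G p hp₁ hint (subset_univ W)
    _ ≤ μ.real (cylEvt W fun _ => true) := hμ.Xi_le_measureReal_cylEvt hp₁ hint W
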